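/- Let H be a Hermitian matrix on ℂ^N with eigenvalues λ_1,…,λ_N, Tr H = 0, and suppose (1/N)∑|λ_s|⁴ ≤ 9^k · ((1/N)∑λ_s²)² for some k (Bonami-type bound). If ‖H‖_F := √((1/N)∑λ_s²) ≥ ε > 0, then for t drawn uniformly from [0, 2/ε], with probability at least 1/3, (1/N²)|Tr e^{-iHt}|² ≤ 1 - 1/(48·9^k). -/

import Mathlib

/-!
Write `I(t) = 1 - G(t)/N²` with `G(t) = ∑_{s,r} (1 - cos ((λ_s - λ_r) t))` and let `T = 2/ε`.
Since `∑ λ_s = 0`, the moment bound and a second-moment count show that a fraction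
`≥ 1/(2·9^k + 3)` of the pairs `(s, r)` have `|λ_s - λ_r| ≥ ε`, and each such pair contributes
at least `1/ε` to `∫₀^T G`.

On the other hand `√G` is subadditive and even, being the norm of `(e^{i(λ_s - λ_r)t} - 1)_{s,r}`
up to a factor `√2`. If the set `B ⊆ [0, T]` where `G < δ` had measure `b > 2T/3`, two translates
of `B` would overlap, which gives `G ≤ 4δ` on `[0, T/3]` and then `G ≤ 9δ` on `[0, T]`; hence
`∫₀^T G ≤ δ b + 9δ (T - b) < 11/3 · δ T`. With `δ = N²/(48·9^k)` this contradicts the lower bound.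
-/

open Matrix MeasureTheory Finset

theorem Matrix.IsHermitian.trace_exp_smul {n : Type*} [Fintype n] [DecidableEq n]
    {H : Matrix n n ℂ} (hH : H.IsHermitian) (c : ℂ) :
    (NormedSpace.exp (c • H)).trace = ∑ s, Complex.exp (c * hH.eigenvalues s) := by
  set U := hH.eigenvectorUnitary
  have hconj : NormedSpace.exp (c • H) =
      (U : Matrix n n ℂ) * NormedSpace.exp (c • diagonal (RCLike.ofReal ∘ hH.eigenvalues)) *
        (star U : Matrix n n ℂ) := by
    conv_lhs => rw [hH.spectral_theorem, ← map_smul, Unitary.conjStarAlgAut_apply]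
    exact Matrix.exp_units_conj (Unitary.toUnits U) _
  rw [hconj, trace_mul_cycle, Unitary.coe_star_mul_self, one_mul, ← diagonal_smul,
    Matrix.exp_diagonal, trace_diagonal]
  simp [Complex.exp_eq_exp_ℂ]

theorem norm_sq_exp_ofReal_mul_I_sub_one (θ : ℝ) :
    ‖Complex.exp (θ * Complex.I) - 1‖ ^ 2 = 2 * (1 - Real.cos θ) := by
  rw [Complex.sq_norm, Complex.normSq_apply, Complex.sub_re, Complex.sub_im,
    Complex.one_re, Complex.one_im, Complex.exp_ofReal_mul_I_re, Complex.exp_ofReal_mul_I_im]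
  nlinarith [Real.sin_sq_add_cos_sq θ]

theorem norm_sq_sum_exp_ofReal_mul_I {ι : Type*} [Fintype ι] (θ : ι → ℝ) :
    ‖∑ s, Complex.exp (θ s * Complex.I)‖ ^ 2 = ∑ s, ∑ r, Real.cos (θ s - θ r) := by
  simp only [Complex.sq_norm, Complex.normSq_apply, Complex.re_sum, Complex.im_sum,
    Complex.exp_ofReal_mul_I_re, Complex.exp_ofReal_mul_I_im, Fintype.sum_mul_sum,
    ← sum_add_distrib, Real.cos_sub]

theorem inv_le_integral_one_sub_cos {Δ ε : ℝ} (hε : 0 < ε) (hΔ : ε ≤ |Δ|) :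
    ε⁻¹ ≤ ∫ t in 0..2 / ε, (1 - Real.cos (Δ * t)) := by
  have hΔ0 : Δ ≠ 0 := abs_pos.mp (hε.trans_le hΔ)
  rw [intervalIntegral.integral_sub intervalIntegrable_const
      ((by fun_prop : Continuous fun t => Real.cos (Δ * t)).intervalIntegrable _ _),
    intervalIntegral.integral_const, intervalIntegral.integral_comp_mul_left Real.cos hΔ0,
    integral_cos, mul_zero, Real.sin_zero, sub_zero, sub_zero, smul_eq_mul, smul_eq_mul, mul_one]
  have hsin : Δ⁻¹ * Real.sin (Δ * (2 / ε)) ≤ ε⁻¹ := by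
    refine (le_abs_self _).trans ?_
    rw [abs_mul, abs_inv]
    calc |Δ|⁻¹ * |Real.sin (Δ * (2 / ε))| ≤ |Δ|⁻¹ * 1 :=
          mul_le_mul_of_nonneg_left (Real.abs_sin_le_one _) (by positivity)
      _ ≤ ε⁻¹ := by rw [mul_one]; exact inv_anti₀ hε hΔ
  linarith [show 2 / ε = 2 * ε⁻¹ by ring]

/-- With `Δ` the pairwise eigenvalue gaps, `N² - phaseSpread Δ t = ‖Tr e^{-iHt}‖²`. -/
noncomputable def phaseSpread {ι : Type*} [Fintype ι] (Δ : ι → ℝ) (t : ℝ) : ℝ :=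
  ∑ p, (1 - Real.cos (Δ p * t))

theorem norm_sq_sum_exp_neg_I_mul {ι : Type*} [Fintype ι] (lam : ι → ℝ) (t : ℝ) :
    ‖∑ s, Complex.exp (-(Complex.I * t) * lam s)‖ ^ 2 =
      Fintype.card ι ^ 2 - phaseSpread (fun p : ι × ι => lam p.1 - lam p.2) t := by
  calc ‖∑ s, Complex.exp (-(Complex.I * t) * lam s)‖ ^ 2
      = ‖∑ s, Complex.exp (↑(-(t * lam s)) * Complex.I)‖ ^ 2 := by push_cast; ring_nf
    _ = ∑ s, ∑ r, Real.cos ((lam s - lam r) * t) := by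
      rw [norm_sq_sum_exp_ofReal_mul_I]
      refine sum_congr rfl fun s _ => sum_congr rfl fun r _ => ?_
      rw [← Real.cos_neg]; ring_nf
    _ = _ := by simp [phaseSpread, Fintype.sum_prod_type, sq]

section phaseSpread

variable {ι : Type*} [Fintype ι] (Δ : ι → ℝ)

theorem phaseSpread_neg (t : ℝ) : phaseSpread Δ (-t) = phaseSpread Δ t := by
  simp only [phaseSpread, mul_neg, Real.cos_neg]

theorem continuous_phaseSpread : Continuous (phaseSpread Δ) := by
  unfold phaseSpread; fun_prop

/-- `√(2 · phaseSpread Δ t)` is the Euclidean norm of `(e^{iΔ_p t} - 1)_p`, and multiplying each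
coordinate by the unimodular `e^{iΔ_p x}` preserves that norm. -/
theorem sqrt_phaseSpread_add_le (x y : ℝ) :
    √(phaseSpread Δ (x + y)) ≤ √(phaseSpread Δ x) + √(phaseSpread Δ y) := by
  let w : ℝ → EuclideanSpace ℂ ι := fun t =>
    WithLp.toLp 2 fun p => Complex.exp (↑(Δ p * t) * Complex.I) - 1
  have hw (t : ℝ) : ‖w t‖ = √2 * √(phaseSpread Δ t) := by
    rw [EuclideanSpace.norm_eq, ← Real.sqrt_mul zero_le_two, phaseSpread, mul_sum]
    simp only [w, norm_sq_exp_ofReal_mul_I_sub_one]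
  have hshift : ‖w (x + y) - w x‖ = ‖w y‖ := by
    simp only [EuclideanSpace.norm_eq, w, PiLp.sub_apply]
    congr! 3 with p
    rw [sub_sub_sub_cancel_right, mul_add, Complex.ofReal_add, add_mul, Complex.exp_add,
      ← mul_sub_one, norm_mul, Complex.norm_exp_ofReal_mul_I, one_mul]
  have := norm_le_norm_add_norm_sub' (w (x + y)) (w x)
  rw [hshift, hw, hw, hw, ← mul_add] at this
  exact le_of_mul_le_mul_left this (by positivity)

theorem card_div_le_integral_phaseSpread {ε : ℝ} (hε : 0 < ε) :
    #{p | ε ≤ |Δ p|} / ε ≤ ∫ t in 0..2 / ε, phaseSpread Δ t := by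
  unfold phaseSpread
  rw [intervalIntegral.integral_finsetSum fun p _ =>
    (by fun_prop : Continuous fun t => 1 - Real.cos (Δ p * t)).intervalIntegrable _ _]
  calc (#{p | ε ≤ |Δ p|} : ℝ) / ε = ∑ p with ε ≤ |Δ p|, ε⁻¹ := by
        rw [sum_const, nsmul_eq_mul, div_eq_mul_inv]
    _ ≤ ∑ p with ε ≤ |Δ p|, ∫ t in 0..2 / ε, (1 - Real.cos (Δ p * t)) :=
        sum_le_sum fun p hp => inv_le_integral_one_sub_cos hε (mem_filter.mp hp).2
    _ ≤ ∑ p, ∫ t in 0..2 / ε, (1 - Real.cos (Δ p * t)) :=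
        sum_le_sum_of_subset_of_nonneg (filter_subset _ _) fun p _ _ =>
          intervalIntegral.integral_nonneg (by positivity) fun t _ =>
            sub_nonneg.mpr (Real.cos_le_one _)

end phaseSpread

theorem Matrix.IsHermitian.norm_sq_trace_exp_neg_I_mul_smul {n : Type*} [Fintype n]
    [DecidableEq n] {H : Matrix n n ℂ} (hH : H.IsHermitian) (t : ℝ) :
    ‖(NormedSpace.exp ((-(Complex.I * t)) • H)).trace‖ ^ 2 = Fintype.card n ^ 2 -
      phaseSpread (fun p : n × n => hH.eigenvalues p.1 - hH.eigenvalues p.2) t := by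
  rw [hH.trace_exp_smul, norm_sq_sum_exp_neg_I_mul]

section Moments

variable {ι : Type*} [Fintype ι] {lam : ι → ℝ}

theorem sum_sub_sq_of_sum_eq_zero (h0 : ∑ s, lam s = 0) :
    ∑ p : ι × ι, (lam p.1 - lam p.2) ^ 2 = 2 * Fintype.card ι * ∑ s, lam s ^ 2 := by
  simp only [Fintype.sum_prod_type, sub_sq, sum_add_distrib, sum_sub_distrib, ← mul_sum,
    ← sum_mul, h0, sum_const, card_univ, nsmul_eq_mul]
  ring

theorem sum_sub_pow_four_of_sum_eq_zero (h0 : ∑ s, lam s = 0) :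
    ∑ p : ι × ι, (lam p.1 - lam p.2) ^ 4 =
      2 * Fintype.card ι * ∑ s, lam s ^ 4 + 6 * (∑ s, lam s ^ 2) ^ 2 := by
  have h (a b : ℝ) :
      (a - b) ^ 4 = a ^ 4 - 4 * a ^ 3 * b + 6 * a ^ 2 * b ^ 2 - 4 * a * b ^ 3 + b ^ 4 := by ring
  simp only [Fintype.sum_prod_type, h, sum_add_distrib, sum_sub_distrib, ← mul_sum, ← sum_mul,
    h0, sum_const, card_univ, nsmul_eq_mul]
  ring

theorem sq_sum_le_card_filter_nonneg_mul_sum_sq {α : Type*} (s : Finset α) (f : α → ℝ)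
    (hf : 0 ≤ ∑ x ∈ s, f x) :
    (∑ x ∈ s, f x) ^ 2 ≤ #{x ∈ s | 0 ≤ f x} * ∑ x ∈ s, f x ^ 2 := by
  have hpos : ∑ x ∈ s, f x ≤ ∑ x ∈ s with 0 ≤ f x, f x := by
    rw [← sum_filter_add_sum_filter_not s (0 ≤ f ·)]
    linarith [sum_nonpos (s := s.filter (¬ 0 ≤ f ·)) fun x hx =>
      (not_le.mp (mem_filter.mp hx).2).le]
  calc (∑ x ∈ s, f x) ^ 2 ≤ (∑ x ∈ s with 0 ≤ f x, f x) ^ 2 := pow_le_pow_left₀ hf hpos 2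
    _ ≤ #{x ∈ s | 0 ≤ f x} * ∑ x ∈ s with 0 ≤ f x, f x ^ 2 := sq_sum_le_card_mul_sum_sq
    _ ≤ #{x ∈ s | 0 ≤ f x} * ∑ x ∈ s, f x ^ 2 := mul_le_mul_of_nonneg_left
      (sum_le_sum_of_subset_of_nonneg (filter_subset _ s) fun x _ _ => sq_nonneg (f x))
      (Nat.cast_nonneg _)

/-- Paley–Zygmund for `f p = n (λ_p₁ - λ_p₂)² - ∑ λ²`: its sum is `n² ∑ λ²` and, by the moment
bound, its second moment is at most `(2C + 3) n² (∑ λ²)²`. -/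
theorem card_sq_le_mul_card_far_pairs (h0 : ∑ s, lam s = 0) {C : ℝ}
    (hB : Fintype.card ι * ∑ s, lam s ^ 4 ≤ C * (∑ s, lam s ^ 2) ^ 2)
    (hA : 0 < ∑ s, lam s ^ 2) :
    (Fintype.card ι : ℝ) ^ 2 ≤ (2 * C + 3) *
      #{p : ι × ι | ∑ s, lam s ^ 2 ≤ Fintype.card ι * (lam p.1 - lam p.2) ^ 2} := by
  set n : ℝ := (Fintype.card ι : ℝ)
  set A := ∑ s, lam s ^ 2
  set f : ι × ι → ℝ := fun p => n * (lam p.1 - lam p.2) ^ 2 - A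
  have hcard : (Fintype.card (ι × ι) : ℝ) = n ^ 2 := by simp [n, sq]
  have hsum : ∑ p, f p = n ^ 2 * A := by
    simp only [f, sum_sub_distrib, ← mul_sum, sum_sub_sq_of_sum_eq_zero h0, sum_const,
      card_univ, hcard, nsmul_eq_mul]
    ring
  have hsum_sq : ∑ p, f p ^ 2 ≤ (2 * C + 3) * n ^ 2 * A ^ 2 := by
    have h (p : ι × ι) : f p ^ 2 = n ^ 2 * (lam p.1 - lam p.2) ^ 4 -
        2 * n * A * (lam p.1 - lam p.2) ^ 2 + A ^ 2 := by ring
    simp only [h, sum_add_distrib, sum_sub_distrib, ← mul_sum, sum_sub_sq_of_sum_eq_zero h0,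
      sum_sub_pow_four_of_sum_eq_zero h0, sum_const, card_univ, hcard, nsmul_eq_mul]
    nlinarith [mul_le_mul_of_nonneg_left hB (by positivity : (0 : ℝ) ≤ 2 * n ^ 2)]
  have hfilter : #{p | 0 ≤ f p} = #{p : ι × ι | A ≤ n * (lam p.1 - lam p.2) ^ 2} := by
    simp only [f, sub_nonneg]
  have hn : 0 < n := by simpa [n] using (nonempty_of_sum_ne_zero hA.ne').card_pos
  have hCS := sq_sum_le_card_filter_nonneg_mul_sum_sq univ f (by rw [hsum]; positivity)
  rw [hsum, hfilter] at hCS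
  refine le_of_mul_le_mul_right ?_ (by positivity : 0 < n ^ 2 * A ^ 2)
  calc n ^ 2 * (n ^ 2 * A ^ 2) = (n ^ 2 * A) ^ 2 := by ring
    _ ≤ _ := hCS
    _ ≤ _ := mul_le_mul_of_nonneg_left hsum_sq (Nat.cast_nonneg _)
    _ = _ := by ring

end Moments

theorem Matrix.IsHermitian.card_sq_le_mul_card_separated_pairs {n : Type*} [Fintype n]
    [DecidableEq n] {H : Matrix n n ℂ} (hH : H.IsHermitian) (htr : H.trace = 0) {C : ℝ}
    (hB : (1 / (Fintype.card n : ℝ)) * ∑ s, |hH.eigenvalues s| ^ 4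
      ≤ C * ((1 / (Fintype.card n : ℝ)) * ∑ s, hH.eigenvalues s ^ 2) ^ 2)
    {ε : ℝ} (hε : 0 < ε)
    (hfar : ε ≤ √((1 / (Fintype.card n : ℝ)) * ∑ s, hH.eigenvalues s ^ 2)) :
    (Fintype.card n : ℝ) ^ 2 ≤
      (2 * C + 3) * #{p : n × n | ε ≤ |hH.eigenvalues p.1 - hH.eigenvalues p.2|} := by
  have h0 : ∑ s, hH.eigenvalues s = 0 := by
    have := (hH.trace_eq_sum_eigenvalues (𝕜 := ℂ)).symm.trans htr
    rwa [← RCLike.ofReal_sum, RCLike.ofReal_eq_zero] at this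
  set lam := hH.eigenvalues
  set N : ℝ := (Fintype.card n : ℝ)
  set A := ∑ s, lam s ^ 2
  have hεA : ε ^ 2 ≤ 1 / N * A := (Real.le_sqrt' hε).mp hfar
  have hN : 0 < N := by
    by_contra! hN
    rw [le_antisymm hN (Nat.cast_nonneg _), div_zero, zero_mul] at hεA
    nlinarith
  have hNεA : N * ε ^ 2 ≤ A := by
    rwa [one_div, ← div_eq_inv_mul, le_div_iff₀ hN, mul_comm] at hεA
  have hB' : N * ∑ s, lam s ^ 4 ≤ C * A ^ 2 := by
    simp only [(by decide : Even 4).pow_abs] at hB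
    have := mul_le_mul_of_nonneg_left hB (sq_nonneg N)
    field_simp at this
    linarith
  have hcount := card_sq_le_mul_card_far_pairs h0 hB' (lt_of_lt_of_le (by positivity) hNεA)
  have hsep : #{p : n × n | A ≤ N * (lam p.1 - lam p.2) ^ 2} ≤
      #{p : n × n | ε ≤ |lam p.1 - lam p.2|} := by
    refine card_le_card (monotone_filter_right _ fun p _ hp => ?_)
    have : ε ^ 2 ≤ (lam p.1 - lam p.2) ^ 2 := le_of_mul_le_mul_left (hNεA.trans hp) hN
    simpa [abs_of_pos hε] using sq_le_sq.mp this
  have hC : 0 < 2 * C + 3 :=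
    pos_of_mul_pos_left ((by positivity : 0 < N ^ 2).trans_le hcount) (Nat.cast_nonneg _)
  exact hcount.trans (mul_le_mul_of_nonneg_left (by exact_mod_cast hsep) hC.le)

section Spreading

variable {f : ℝ → ℝ} (hsub : ∀ x y, √(f (x + y)) ≤ √(f x) + √(f y))
include hsub

theorem le_sq_add_of_sqrt_subadditive {x y a b : ℝ} (ha : 0 ≤ a) (hb : 0 ≤ b)
    (hx : f x ≤ a ^ 2) (hy : f y ≤ b ^ 2) : f (x + y) ≤ (a + b) ^ 2 :=
  (Real.sqrt_le_left (add_nonneg ha hb)).mp <| (hsub x y).trans <|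
    add_le_add ((Real.sqrt_le_left ha).mpr hx) ((Real.sqrt_le_left hb).mpr hy)

section Sublevel

variable (heven : ∀ x, f (-x) = f x) (hf : Measurable f) {T δ : ℝ} (hT : 0 ≤ T) (hδ : 0 ≤ δ)
  (hvol : ENNReal.ofReal (2 * T / 3) < volume {t | t ∈ Set.Icc 0 T ∧ f t < δ})
include heven hf hT hδ hvol

theorem le_four_mul_of_volume_sublevel_gt {x : ℝ} (hx : x ∈ Set.Icc 0 (T / 3)) :
    f x ≤ 4 * δ := by
  set B := {t | t ∈ Set.Icc 0 T ∧ f t < δ}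
  have hB : MeasurableSet B := measurableSet_Icc.inter (hf measurableSet_Iio)
  have hBshift : (· + x) ⁻¹' B ⊆ Set.Icc (-(T / 3)) T := fun t ht =>
    ⟨by linarith [ht.1.1, hx.2], by linarith [ht.1.2, hx.1]⟩
  have hcover : volume (Set.Icc (-(T / 3)) T) < volume ((· + x) ⁻¹' B) + volume B := by
    rw [measure_preimage_add_right, Real.volume_Icc,
      show T - -(T / 3) = 2 * T / 3 + 2 * T / 3 by ring, ENNReal.ofReal_add (by positivity)
        (by positivity)]
    exact ENNReal.add_lt_add hvol hvol
  obtain ⟨t, htx, ht⟩ := nonempty_inter_of_measure_lt_add volume hB hBshift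
    (fun t ht => ⟨by linarith [ht.1.1, hT], ht.1.2⟩) hcover
  have hδsq : δ = √δ ^ 2 := (Real.sq_sqrt hδ).symm
  have := le_sq_add_of_sqrt_subadditive hsub (x := t + x) (y := -t) (Real.sqrt_nonneg δ)
    (Real.sqrt_nonneg δ) (hδsq ▸ htx.2.le) (hδsq ▸ (heven t).symm ▸ ht.2.le)
  rwa [add_neg_cancel_comm, ← two_mul, mul_pow, ← hδsq, show (2 : ℝ) ^ 2 = 4 by norm_num]
    at this

theorem le_nine_mul_of_volume_sublevel_gt {x : ℝ} (hx : x ∈ Set.Icc 0 T) : f x ≤ 9 * δ := by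
  rcases le_total x (T / 3) with hxT | hxT
  · linarith [le_four_mul_of_volume_sublevel_gt hsub heven hf hT hδ hvol ⟨hx.1, hxT⟩]
  set B := {t | t ∈ Set.Icc 0 T ∧ f t < δ}
  have hsplit : ENNReal.ofReal T = ENNReal.ofReal (2 * T / 3) + ENNReal.ofReal (T / 3) := by
    rw [← ENNReal.ofReal_add (by positivity) (by positivity)]; ring_nf
  have hcover : volume (Set.Icc 0 T) < volume B + volume (Set.Icc (x - T / 3) x) := by
    rw [Real.volume_Icc, Real.volume_Icc, sub_zero, sub_sub_cancel, hsplit]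
    exact ENNReal.add_lt_add_right ENNReal.ofReal_ne_top hvol
  obtain ⟨t, ht, htx⟩ := nonempty_inter_of_measure_lt_add volume measurableSet_Icc
    (fun t ht => ht.1) (Set.Icc_subset_Icc (by linarith) hx.2) hcover
  have hδsq : δ = √δ ^ 2 := (Real.sq_sqrt hδ).symm
  have h4 : f (x - t) ≤ (2 * √δ) ^ 2 := by
    rw [mul_pow, ← hδsq]
    linarith [le_four_mul_of_volume_sublevel_gt hsub heven hf hT hδ hvol
      (x := x - t) ⟨by linarith [htx.2], by linarith [htx.1]⟩]
  have := le_sq_add_of_sqrt_subadditive hsub (Real.sqrt_nonneg δ) (by positivity)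
    (hδsq ▸ ht.2.le) h4
  rwa [add_sub_cancel, show √δ + 2 * √δ = 3 * √δ by ring, mul_pow, ← hδsq,
    show (3 : ℝ) ^ 2 = 9 by norm_num] at this

end Sublevel

variable (heven : ∀ x, f (-x) = f x) (hf : Continuous f) {T δ : ℝ} (hT : 0 ≤ T) (hδ : 0 < δ)
include heven hf hT hδ

theorem integral_lt_of_volume_sublevel_gt
    (hvol : ENNReal.ofReal (2 * T / 3) < volume {t | t ∈ Set.Icc 0 T ∧ f t < δ}) :
    ∫ t in 0..T, f t < 11 / 3 * δ * T := by
  set B := {t | t ∈ Set.Icc 0 T ∧ f t < δ}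
  have hB : MeasurableSet B := measurableSet_Icc.inter (hf.measurable measurableSet_Iio)
  have hBsub : B ⊆ Set.Icc 0 T := fun t ht => ht.1
  have hb : 2 * T / 3 < volume.real B := by
    rw [measureReal_def, ← ENNReal.ofReal_lt_iff_lt_toReal (by positivity)
      (measure_ne_top_of_subset hBsub (by rw [Real.volume_Icc]; exact ENNReal.ofReal_ne_top))]
    exact hvol
  have hle : ∀ t ∈ Set.Icc 0 T, f t ≤ 9 * δ - B.indicator (fun _ => 8 * δ) t := by
    intro t ht
    by_cases htB : t ∈ B
    · rw [Set.indicator_of_mem htB]; linarith [htB.2]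
    · rw [Set.indicator_of_notMem htB, sub_zero]
      exact le_nine_mul_of_volume_sublevel_gt hsub heven hf.measurable hT hδ.le hvol ht
  have hind : IntegrableOn (B.indicator fun _ => 8 * δ) (Set.Icc 0 T) :=
    (continuous_const.integrableOn_Icc (f := fun _ : ℝ => 8 * δ)).indicator hB
  have hint : ∫ t in Set.Icc 0 T, (9 * δ - B.indicator (fun _ => 8 * δ) t) =
      9 * δ * T - 8 * δ * volume.real B := by
    rw [integral_sub continuous_const.integrableOn_Icc hind,
      setIntegral_indicator hB, Set.inter_eq_right.mpr hBsub, setIntegral_const, setIntegral_const,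
      Real.volume_real_Icc_of_le hT, sub_zero, smul_eq_mul, smul_eq_mul]
    ring
  calc ∫ t in 0..T, f t = ∫ t in Set.Icc 0 T, f t := by
        rw [intervalIntegral.integral_of_le hT, integral_Icc_eq_integral_Ioc]
    _ ≤ 9 * δ * T - 8 * δ * volume.real B := by
        rw [← hint]
        exact setIntegral_mono_on hf.integrableOn_Icc
          (continuous_const.integrableOn_Icc.sub hind) measurableSet_Icc hle
    _ < 11 / 3 * δ * T := by nlinarith

theorem volume_superlevel_ge_of_integral_ge (hint : 11 / 3 * δ * T ≤ ∫ t in 0..T, f t) :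
    ENNReal.ofReal (T / 3) ≤ volume {t | t ∈ Set.Icc 0 T ∧ δ ≤ f t} := by
  by_contra! hS
  refine (hint.trans_lt (integral_lt_of_volume_sublevel_gt hsub heven hf hT hδ ?_)).false
  by_contra! hB
  have hcover : Set.Icc 0 T ⊆
      {t | t ∈ Set.Icc 0 T ∧ δ ≤ f t} ∪ {t | t ∈ Set.Icc 0 T ∧ f t < δ} :=
    fun t ht => (le_or_gt δ (f t)).imp (⟨ht, ·⟩) (⟨ht, ·⟩)
  have := (measure_mono (μ := volume) hcover).trans (measure_union_le _ _)
  have hsplit : ENNReal.ofReal T = ENNReal.ofReal (T / 3) + ENNReal.ofReal (2 * T / 3) := by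
    rw [← ENNReal.ofReal_add (by positivity) (by positivity)]; ring_nf
  rw [Real.volume_Icc, sub_zero, hsplit] at this
  exact this.not_gt
    (ENNReal.add_lt_add_of_lt_of_le (ne_top_of_le_ne_top ENNReal.ofReal_ne_top hB) hS hB)

end Spreading

theorem far_case_bound_general {N : ℕ} (k : ℕ)
    (H : Matrix (Fin N) (Fin N) ℂ) (hH : H.IsHermitian)
    (htr : H.trace = 0)
    (hBonami : (1 / (N : ℝ)) * ∑ s : Fin N, |hH.eigenvalues s| ^ 4
      ≤ 9 ^ k * ((1 / (N : ℝ)) * ∑ s : Fin N, (hH.eigenvalues s) ^ 2) ^ 2)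
    (ε : ℝ) (hε : 0 < ε)
    (hfar : ε ≤ Real.sqrt ((1 / (N : ℝ)) * ∑ s : Fin N, (hH.eigenvalues s) ^ 2)) :
    ENNReal.ofReal ((1 / 3) * (2 / ε)) ≤
      volume {t : ℝ | t ∈ Set.Icc 0 (2 / ε) ∧
        (1 / (N : ℝ) ^ 2) *
          ‖(NormedSpace.exp ((-(Complex.I * t)) • H)).trace‖ ^ 2
        ≤ 1 - 1 / (48 * 9 ^ k)} := by
  set Δ : Fin N × Fin N → ℝ := fun p => hH.eigenvalues p.1 - hH.eigenvalues p.2 with hΔ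
  have hN : (0 : ℝ) < N := by
    rcases N.eq_zero_or_pos with rfl | hN
    · simp only [CharP.cast_eq_zero, div_zero, zero_mul, Real.sqrt_zero] at hfar
      linarith
    · exact_mod_cast hN
  have hcount : (N : ℝ) ^ 2 ≤ (2 * 9 ^ k + 3) * #{p | ε ≤ |Δ p|} := by
    simpa using hH.card_sq_le_mul_card_separated_pairs htr (C := 9 ^ k) (by simpa using hBonami)
      hε (by simpa using hfar)
  rw [show (1 / 3 : ℝ) * (2 / ε) = 2 / ε / 3 by ring]
  refine (volume_superlevel_ge_of_integral_ge (δ := N ^ 2 / (48 * 9 ^ k))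
    (sqrt_phaseSpread_add_le Δ) (phaseSpread_neg Δ) (continuous_phaseSpread Δ) (by positivity)
    (div_pos (pow_pos hN 2) (by positivity))
    ((?_ : _ ≤ _).trans (card_div_le_integral_phaseSpread Δ hε))).trans_eq
    (congrArg volume (Set.ext fun t => and_congr_right fun _ => ?_))
  · rw [show 11 / 3 * (N ^ 2 / (48 * 9 ^ k)) * (2 / ε) = 11 * N ^ 2 / (72 * 9 ^ k) / ε by ring]
    refine div_le_div_of_nonneg_right ((div_le_iff₀ (by positivity)).mpr ?_) hε.le
    nlinarith [one_le_pow₀ (by norm_num : (1 : ℝ) ≤ 9) (n := k),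
      (Nat.cast_nonneg _ : (0 : ℝ) ≤ #{p | ε ≤ |Δ p|})]
  · rw [hH.norm_sq_trace_exp_neg_I_mul_smul, Fintype.card_fin, ← hΔ]
    field_simp
    constructor <;> intro h <;> linarith

/-- Combination of the spectral-condition and spectral-spreading lemmas: for a traceless
Hermitian `H` satisfying a Bonami-type moment bound with `‖H‖_F ≥ ε`, a uniformly random
`t ∈ [0, 2/ε]` satisfies `(1/N²)|Tr e^{-iHt}|² ≤ 1 - 1/(48·9^k)` with probability `≥ 1/3`. -/
theorem far_case_bound {N : ℕ} (hN : 1 ≤ N) (k : ℕ)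
    (H : Matrix (Fin N) (Fin N) ℂ) (hH : H.IsHermitian)
    (htr : H.trace = 0)
    (hBonami : (1 / (N : ℝ)) * ∑ s : Fin N, |hH.eigenvalues s| ^ 4
      ≤ 9 ^ k * ((1 / (N : ℝ)) * ∑ s : Fin N, (hH.eigenvalues s) ^ 2) ^ 2)
    (ε : ℝ) (hε : 0 < ε)
    (hfar : ε ≤ Real.sqrt ((1 / (N : ℝ)) * ∑ s : Fin N, (hH.eigenvalues s) ^ 2)) :
    ENNReal.ofReal ((1 / 3) * (2 / ε)) ≤
      volume {t : ℝ | t ∈ Set.Icc 0 (2 / ε) ∧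
        (1 / (N : ℝ) ^ 2) *
          ‖(NormedSpace.exp ((-(Complex.I * t)) • H)).trace‖ ^ 2
        ≤ 1 - 1 / (48 * 9 ^ k)} :=
  far_case_bound_general k H hH htr hBonami ε hε hfar
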